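/- Define the linear operator Λ on R[x] by Λp = Σ_{k ≥ 1} (w(k)/k!) · D^k p, where D is formal differentiation (the sum is finite on each polynomial). Then the Möbius-type enumerators form the basic sequence of Λ: b_n(0; w) = 0 for every n ≥ 1, and Λ(b_n(x; w)) = n · b_{n−1}(x; w) for every n ≥ 1. (Theorem 3.4, part 2, basic-sequence statement.) -/

import Mathlib

/-!
Write `a_m(x) = ∑_{σ ∈ Π_m} w(0̂, σ) x^{|σ|}` and let `U` be the linear map `x^m ↦ a_m`; when
`w(1) = 1` each `a_m` has degree `m` and leading coefficient `1`, so `U` is injective.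
Sorting the partitions `σ ≥ π` by the quotient `σ / π`, a partition of the blocks of `π`, gives
`∑_{σ ≥ π} w(π, σ) x^{|σ|} = a_{|π|}`, and the recursion defining `µ^w` turns this into
`U b_n = x^n`. Marking one block of a partition gives `a_m' = ∑_k C(m, k) w(k) a_{m-k}`, that is
`U (Λ x^m) = D (U x^m)`. Hence `U (Λ b_n) = D x^n = n x^{n-1} = U (n b_{n-1})`.
-/

open Finset

variable {R : Type*} [CommRing R] [Algebra ℚ R]

/-- The zeta-type function `w(τ, σ) = ∏_{B a block of σ} w(#{blocks of τ contained in B})`. -/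
noncomputable def zetaRel (w : ℕ → R) {n : ℕ}
    (τ σ : Finpartition (univ : Finset (Fin n))) : R :=
  ∏ B ∈ σ.parts, w ((τ.parts.filter fun A => A ⊆ B).card)

open scoped Classical in
/-- The Möbius-type function: `µ^w(π, π) = 1` and
`µ^w(π, σ) = -∑_{π ≤ τ < σ} µ^w(π, τ) w(τ, σ)` for `π < σ`. -/
noncomputable def muW (w : ℕ → R) {n : ℕ} (π : Finpartition (univ : Finset (Fin n)))
    (σ : Finpartition (univ : Finset (Fin n))) : R :=
  if π = σ then 1
  else -∑ τ ∈ (Finset.univ.filter fun τ => π ≤ τ ∧ τ < σ).attach,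
        muW w π τ.1 * zetaRel w τ.1 σ
termination_by (Finset.univ.filter fun τ => τ < σ).card
decreasing_by
  classical
  obtain ⟨-, hτσ⟩ := (Finset.mem_filter.mp τ.2).2
  apply Finset.card_lt_card
  constructor
  · intro x hx
    simp only [Finset.mem_filter, Finset.mem_univ, true_and] at hx ⊢
    exact hx.trans hτσ
  · intro hsub
    have hτ : τ.1 ∈ Finset.univ.filter fun x => x < σ := by simp [hτσ]
    have := hsub hτ
    simp at this

/-- The Möbius-type enumerator `b_n(x; w)` as a polynomial:  `b_0 = 1` and
`b_n(x; w) = ∑_{π ∈ Π_n} µ^w(0̂, π) x^{|π|}` for `n ≥ 1`. -/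
noncomputable def bPoly (w : ℕ → R) (n : ℕ) : Polynomial R :=
  if n = 0 then 1 else
    ∑ π : Finpartition (univ : Finset (Fin n)),
      Polynomial.C (muW w ⊥ π) * Polynomial.X ^ π.parts.card

/-- The operator `p ↦ ∑_{k ≥ 1} (c k / k!) D^k p` on `R[x]`, where `D` is formal
differentiation; the sum is finite on each polynomial since `D^k p = 0` for
`k > deg p`. -/
noncomputable def opOf (c : ℕ → R) (p : Polynomial R) : Polynomial R :=
  ∑ k ∈ Finset.Icc 1 p.natDegree,
    (algebraMap ℚ R (1 / k.factorial) * c k) • (Polynomial.derivative^[k] p)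

open Polynomial

namespace Finpartition

variable {α β : Type*} [DecidableEq α] [DecidableEq β] {s : Finset α} {t : Finset β} {f : α → β}

def mapBijOn (σ : Finpartition s) (hf : Set.BijOn f s t) : Finpartition t :=
  ofExistsUnique (σ.parts.image (image f))
    (by
      simp only [mem_image, forall_exists_index, and_imp]
      rintro _ A hA rfl
      exact image_subset_iff.2 fun a ha => hf.mapsTo (σ.le hA ha))
    (by
      intro b hb
      obtain ⟨a, ha, rfl⟩ := hf.surjOn hb
      refine ⟨(σ.part a).image f, ⟨mem_image_of_mem _ (σ.part_mem.2 ha),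
        mem_image_of_mem _ (σ.mem_part_self.2 ha)⟩, ?_⟩
      rintro _ ⟨hB, hfa⟩
      obtain ⟨A, hA, rfl⟩ := mem_image.1 hB
      obtain ⟨a', ha', hfa'⟩ := mem_image.1 hfa
      rw [hf.injOn (σ.le hA ha') ha hfa'] at ha'
      rw [σ.part_eq_of_mem hA ha'])
    (by simp)

theorem parts_mapBijOn (σ : Finpartition s) (hf : Set.BijOn f s t) :
    (σ.mapBijOn hf).parts = σ.parts.image (image f) := rfl

theorem injOn_image_parts (σ : Finpartition s) (hf : Set.InjOn f s) :
    Set.InjOn (image f) σ.parts := fun _ hA _ hB =>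
  (image_eq_image_iff_of_injOn hf (σ.le hA) (σ.le hB)).1

theorem card_parts_mapBijOn (σ : Finpartition s) (hf : Set.BijOn f s t) :
    #(σ.mapBijOn hf).parts = #σ.parts :=
  card_image_of_injOn (σ.injOn_image_parts hf.injOn)

theorem prod_card_mapBijOn {M : Type*} [CommMonoid M] (g : ℕ → M) (σ : Finpartition s)
    (hf : Set.BijOn f s t) : ∏ B ∈ (σ.mapBijOn hf).parts, g #B = ∏ A ∈ σ.parts, g #A := by
  rw [parts_mapBijOn, prod_image (σ.injOn_image_parts hf.injOn)]
  exact prod_congr rfl fun A hA => by rw [card_image_of_injOn (hf.injOn.mono (σ.le hA))]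

theorem mapBijOn_mapBijOn {f' : β → α} (σ : Finpartition s) (hf : Set.BijOn f s t)
    (hf' : Set.BijOn f' t s) (hinv : Set.LeftInvOn f' f s) :
    (σ.mapBijOn hf).mapBijOn hf' = σ := by
  have hA : Set.EqOn (image f' ∘ image f) id σ.parts := fun A hA => by
    rw [Function.comp_apply, image_image, image_congr (hinv.mono (σ.le hA)).eqOn, image_id, id]
  ext1
  rw [parts_mapBijOn, parts_mapBijOn, image_image, image_congr hA, image_id]

theorem eq_bot_of_card_parts_eq (σ : Finpartition s) (hσ : #σ.parts = #s) : σ = ⊥ := by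
  have hcard : ∀ B ∈ σ.parts, 1 = #B := by
    refine (sum_eq_sum_iff_of_le fun B hB => card_pos.2 (σ.nonempty_of_mem_parts hB)).1 ?_
    rw [sum_const, smul_eq_mul, mul_one, hσ, σ.sum_card_parts]
  ext1
  refine eq_of_subset_of_card_le (fun B hB => ?_) (by rw [card_bot, hσ])
  obtain ⟨a, rfl⟩ := card_eq_one.1 (hcard B hB).symm
  exact mem_bot_iff.2 ⟨a, σ.le hB (mem_singleton_self a), rfl⟩

theorem parts_avoid_of_mem (σ : Finpartition s) {B : Finset α} (hB : B ∈ σ.parts) : (σ.avoid B).parts = σ.parts.erase B := by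
  ext A
  rw [mem_avoid, mem_erase]
  constructor
  · rintro ⟨A', hA', hA'B, rfl⟩
    have hne : A' ≠ B := fun h => hA'B (h ▸ le_rfl)
    have hdisj : Disjoint A' B := σ.disjoint hA' hB hne
    rw [sdiff_eq_self_of_disjoint hdisj]
    exact ⟨hne, hA'⟩
  · rintro ⟨hne, hA⟩
    have hdisj : Disjoint A B := σ.disjoint hA hB hne
    refine ⟨A, hA, fun hAB => ?_, sdiff_eq_self_of_disjoint hdisj⟩
    obtain ⟨x, hx⟩ := σ.nonempty_of_mem_parts hA
    exact disjoint_left.1 hdisj hx (hAB hx)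

section Quotient

variable (τ : Finpartition s)

theorem subset_of_le {σ : Finpartition s} (h : τ ≤ σ) {A C : Finset α} (hA : A ∈ τ.parts)
    (hC : C ∈ σ.parts) {x : α} (hxA : x ∈ A) (hxC : x ∈ C) : A ⊆ C := by
  obtain ⟨C', hC', hAC'⟩ := h hA
  rwa [σ.eq_of_mem_parts hC hC' hxC (hAC' hxA)]

theorem biUnion_filter_subset {σ : Finpartition s} (h : τ ≤ σ) {C : Finset α}
    (hC : C ∈ σ.parts) : {A ∈ τ.parts | A ⊆ C}.biUnion id = C := by
  ext x
  simp only [mem_biUnion, mem_filter, id]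
  refine ⟨fun ⟨A, ⟨_, hAC⟩, hxA⟩ => hAC hxA, fun hxC => ?_⟩
  have hx : x ∈ s := σ.le hC hxC
  exact ⟨τ.part x, ⟨τ.part_mem.2 hx, τ.subset_of_le h (τ.part_mem.2 hx) hC
    (τ.mem_part_self.2 hx) hxC⟩, τ.mem_part_self.2 hx⟩

def quotient {σ : Finpartition s} (h : τ ≤ σ) : Finpartition τ.parts :=
  ofExistsUnique (σ.parts.image fun C => {A ∈ τ.parts | A ⊆ C})
    (by
      simp only [mem_image, forall_exists_index, and_imp]
      rintro _ C _ rfl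
      exact filter_subset _ _)
    (by
      intro A hA
      obtain ⟨C, hC, hAC⟩ := h hA
      refine ⟨_, ⟨mem_image_of_mem _ hC, mem_filter.2 ⟨hA, hAC⟩⟩, ?_⟩
      rintro _ ⟨hP, hAP⟩
      obtain ⟨C', hC', rfl⟩ := mem_image.1 hP
      obtain ⟨x, hx⟩ := τ.nonempty_of_mem_parts hA
      rw [σ.eq_of_mem_parts hC' hC ((mem_filter.1 hAP).2 hx) (hAC hx)])
    (by
      simp only [mem_image, not_exists, not_and]
      intro C hC hempty
      rw [← τ.biUnion_filter_subset h hC, hempty, biUnion_empty] at hC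
      exact σ.empty_notMem_parts hC)

theorem parts_quotient {σ : Finpartition s} (h : τ ≤ σ) :
    (τ.quotient h).parts = σ.parts.image fun C => {A ∈ τ.parts | A ⊆ C} := rfl

theorem injOn_filter_subset {σ : Finpartition s} (h : τ ≤ σ) :
    Set.InjOn (fun C => {A ∈ τ.parts | A ⊆ C}) σ.parts := fun C hC C' hC' hCC' => by
  rw [← τ.biUnion_filter_subset h hC, ← τ.biUnion_filter_subset h hC']
  exact congrArg (Finset.biUnion · id) hCC'

theorem card_parts_quotient {σ : Finpartition s} (h : τ ≤ σ) :
    #(τ.quotient h).parts = #σ.parts :=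
  card_image_of_injOn (τ.injOn_filter_subset h)

theorem prod_card_quotient {M : Type*} [CommMonoid M] (g : ℕ → M) {σ : Finpartition s}
    (h : τ ≤ σ) :
    ∏ P ∈ (τ.quotient h).parts, g #P = ∏ C ∈ σ.parts, g #{A ∈ τ.parts | A ⊆ C} :=
  prod_image (τ.injOn_filter_subset h)

def coarsen (ρ : Finpartition τ.parts) : Finpartition s :=
  ofExistsUnique (ρ.parts.image fun P => P.biUnion id)
    (by
      simp only [mem_image, forall_exists_index, and_imp]
      rintro _ P hP rfl
      exact biUnion_subset.2 fun A hA => τ.le (ρ.le hP hA))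
    (by
      intro x hx
      have hA := τ.part_mem.2 hx
      refine ⟨_, ⟨mem_image_of_mem _ (ρ.part_mem.2 hA),
        mem_biUnion.2 ⟨_, ρ.mem_part_self.2 hA, τ.mem_part_self.2 hx⟩⟩, ?_⟩
      rintro _ ⟨hP, hxP⟩
      obtain ⟨P, hP', rfl⟩ := mem_image.1 hP
      obtain ⟨A, hAP, hxA⟩ := mem_biUnion.1 hxP
      rw [← τ.part_eq_of_mem (ρ.le hP' hAP) hxA] at hAP
      rw [ρ.part_eq_of_mem hP' hAP])
    (by
      simp only [mem_image, not_exists, not_and]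
      intro P hP hempty
      obtain ⟨A, hA⟩ := ρ.nonempty_of_mem_parts hP
      obtain ⟨x, hx⟩ := τ.nonempty_of_mem_parts (ρ.le hP hA)
      have hxP : x ∈ P.biUnion id := mem_biUnion.2 ⟨A, hA, hx⟩
      simp [hempty] at hxP)

theorem parts_coarsen (ρ : Finpartition τ.parts) :
    (τ.coarsen ρ).parts = ρ.parts.image fun P => P.biUnion id := rfl

theorem le_coarsen (ρ : Finpartition τ.parts) : τ ≤ τ.coarsen ρ := fun A hA => by
  obtain ⟨P, hP, hAP⟩ := ρ.exists_mem hA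
  exact ⟨P.biUnion id, mem_image_of_mem _ hP, subset_biUnion_of_mem id hAP⟩

theorem filter_subset_biUnion (ρ : Finpartition τ.parts) {P : Finset (Finset α)}
    (hP : P ∈ ρ.parts) : {A ∈ τ.parts | A ⊆ P.biUnion id} = P := by
  ext A
  rw [mem_filter]
  refine ⟨fun ⟨hA, hAP⟩ => ?_, fun hA => ⟨ρ.le hP hA, subset_biUnion_of_mem id hA⟩⟩
  obtain ⟨x, hx⟩ := τ.nonempty_of_mem_parts hA
  obtain ⟨A', hA'P, hxA'⟩ := mem_biUnion.1 (hAP hx)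
  rwa [τ.eq_of_mem_parts hA (ρ.le hP hA'P) hx hxA']

theorem quotient_coarsen (ρ : Finpartition τ.parts) : τ.quotient (τ.le_coarsen ρ) = ρ := by
  ext1
  rw [parts_quotient, parts_coarsen, image_image]
  exact (image_congr fun P hP => τ.filter_subset_biUnion ρ hP).trans image_id

theorem coarsen_quotient {σ : Finpartition s} (h : τ ≤ σ) : τ.coarsen (τ.quotient h) = σ := by
  ext1
  rw [parts_coarsen, parts_quotient, image_image]
  exact (image_congr fun C hC => τ.biUnion_filter_subset h hC).trans image_id

end Quotient

end Finpartition

section ZetaPoly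

variable {α β S : Type*} [DecidableEq α] [DecidableEq β] [CommSemiring S] (w : ℕ → S)

/-- The polynomial `a_{#s}(x; w)`; note `∏_{B ∈ σ} w(#B) = w(0̂, σ)`. -/
noncomputable def zetaPolyOn (s : Finset α) : S[X] :=
  ∑ σ : Finpartition s, C (∏ B ∈ σ.parts, w #B) * X ^ #σ.parts

noncomputable def zetaPoly (m : ℕ) : S[X] :=
  zetaPolyOn w (univ : Finset (Fin m))

theorem zetaPolyOn_empty : zetaPolyOn w (∅ : Finset α) = 1 := by
  have : Unique (Finpartition (∅ : Finset α)) := inferInstanceAs (Unique (Finpartition ⊥))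
  simp [zetaPolyOn, Finpartition.parts_eq_empty_iff.2 rfl]

theorem zetaPolyOn_eq_of_bijOn {s : Finset α} {t : Finset β} {f : α → β}
    (hf : Set.BijOn f s t) : zetaPolyOn w s = zetaPolyOn w t := by
  rcases isEmpty_or_nonempty α with hα | hα
  · obtain rfl : s = ∅ := s.eq_empty_of_isEmpty
    obtain rfl : t = ∅ := coe_eq_empty.1 (by simpa using hf.image_eq.symm)
    rw [zetaPolyOn_empty, zetaPolyOn_empty]
  have hinv := hf.invOn_invFunOn
  have hg : Set.BijOn (Function.invFunOn f s) t s :=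
    hinv.symm.bijOn hf.surjOn.mapsTo_invFunOn hf.mapsTo
  refine sum_nbij' (·.mapBijOn hf) (·.mapBijOn hg) (by simp) (by simp)
    (fun σ _ => σ.mapBijOn_mapBijOn hf hg hinv.1) (fun ρ _ => ρ.mapBijOn_mapBijOn hg hf hinv.2)
    fun σ _ => ?_
  rw [Finpartition.prod_card_mapBijOn, Finpartition.card_parts_mapBijOn]

theorem zetaPolyOn_eq_zetaPoly (s : Finset α) : zetaPolyOn w s = zetaPoly w #s := by
  refine (zetaPolyOn_eq_of_bijOn w (f := Subtype.val ∘ s.equivFin.symm) ⟨?_, ?_, ?_⟩).symm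
  · exact fun i _ => (s.equivFin.symm i).2
  · exact (Subtype.val_injective.comp s.equivFin.symm.injective).injOn
  · exact fun a ha => ⟨s.equivFin ⟨a, ha⟩, mem_coe.2 (mem_univ _), by simp⟩

theorem natDegree_zetaPolyOn_le (s : Finset α) : (zetaPolyOn w s).natDegree ≤ #s :=
  natDegree_sum_le_of_forall_le _ _ fun σ _ =>
    (natDegree_C_mul_X_pow_le _ _).trans σ.card_parts_le_card

theorem coeff_zetaPolyOn_card (hw : w 1 = 1) (s : Finset α) : (zetaPolyOn w s).coeff #s = 1 := by
  rw [zetaPolyOn, finsetSum_coeff, sum_eq_single ⊥]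
  · rw [coeff_C_mul_X_pow, if_pos (Finpartition.card_bot s).symm, Finpartition.parts_bot,
      prod_map]
    exact prod_eq_one fun a _ => by simpa using hw
  · intro σ _ hσ
    rw [coeff_C_mul_X_pow, if_neg fun h => hσ (σ.eq_bot_of_card_parts_eq h.symm)]
  · simp

theorem natDegree_zetaPoly_le (m : ℕ) : (zetaPoly w m).natDegree ≤ m := by
  simpa [zetaPoly] using natDegree_zetaPolyOn_le w (univ : Finset (Fin m))

theorem coeff_zetaPoly_self (hw : w 1 = 1) (m : ℕ) : (zetaPoly w m).coeff m = 1 := by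
  simpa [zetaPoly] using coeff_zetaPolyOn_card w hw (univ : Finset (Fin m))

open scoped Classical in
/-- Sorting the partitions `σ ≥ τ` by their quotients `σ / τ`, which range over all partitions of
the set of blocks of `τ`. -/
theorem zetaPolyOn_parts {s : Finset α} (τ : Finpartition s) :
    zetaPolyOn w τ.parts = ∑ σ : Finpartition s with τ ≤ σ,
      C (∏ C ∈ σ.parts, w #{A ∈ τ.parts | A ⊆ C}) * X ^ #σ.parts := by
  refine (sum_nbij' (fun σ => if h : τ ≤ σ then τ.quotient h else ⊥) τ.coarsen (by simp)
    (by simp [τ.le_coarsen]) (fun σ hσ => ?_) (fun ρ _ => ?_) (fun σ hσ => ?_)).symm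
  · rw [dif_pos (mem_filter.1 hσ).2, τ.coarsen_quotient]
  · rw [dif_pos (τ.le_coarsen ρ), τ.quotient_coarsen]
  · rw [dif_pos (mem_filter.1 hσ).2, τ.prod_card_quotient, τ.card_parts_quotient]

/-- `σ ↦ σ.avoid B` is a bijection onto the partitions of `s \ B`. -/
theorem sum_mem_parts_C_mul_X_pow {s B : Finset α} (hBs : B ⊆ s) (hB : B.Nonempty) :
    ∑ σ : Finpartition s with B ∈ σ.parts, C (∏ A ∈ σ.parts, w #A) * X ^ (#σ.parts - 1) =
      w #B • zetaPolyOn w (s \ B) := by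
  have hBρ : ∀ ρ : Finpartition (s \ B), B ∉ ρ.parts := fun ρ hBρ => by
    obtain ⟨x, hx⟩ := hB
    exact (mem_sdiff.1 (ρ.le hBρ hx)).2 hx
  rw [zetaPolyOn, smul_sum]
  refine sum_nbij' (·.avoid B) (·.extend hB.ne_empty sdiff_disjoint (sdiff_sup_cancel hBs))
    (by simp) (by simp [Finpartition.extend_parts]) (fun σ hσ => ?_) (fun ρ _ => ?_)
    (fun σ hσ => ?_)
  · replace hσ : B ∈ σ.parts := (mem_filter.1 hσ).2
    ext1
    rw [Finpartition.extend_parts, σ.parts_avoid_of_mem hσ, insert_erase hσ]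
  · ext1
    rw [Finpartition.parts_avoid_of_mem _ (by simp [Finpartition.extend_parts]),
      Finpartition.extend_parts, erase_insert (hBρ ρ)]
  · replace hσ : B ∈ σ.parts := (mem_filter.1 hσ).2
    rw [σ.parts_avoid_of_mem hσ, card_erase_of_mem hσ, ← mul_prod_erase _ _ hσ, C_mul,
      smul_eq_C_mul, mul_assoc]

theorem derivative_zetaPolyOn (s : Finset α) :
    derivative (zetaPolyOn w s) =
      ∑ B ∈ s.powerset with B.Nonempty, w #B • zetaPolyOn w (s \ B) := by
  have hmark : ∀ σ : Finpartition s, derivative (C (∏ A ∈ σ.parts, w #A) * X ^ #σ.parts) =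
      ∑ B ∈ σ.parts, C (∏ A ∈ σ.parts, w #A) * X ^ (#σ.parts - 1) := fun σ => by
    rw [derivative_C_mul_X_pow, sum_const, nsmul_eq_mul, C_mul, mul_comm (C _), ← C_eq_natCast,
      mul_assoc]
  rw [zetaPolyOn, derivative_sum, sum_congr rfl fun σ _ => hmark σ,
    sum_comm' (t' := s.powerset.filter (·.Nonempty)) (s' := fun B => univ.filter (B ∈ ·.parts))]
  · exact sum_congr rfl fun B hB => by
      obtain ⟨hBs, hB⟩ := mem_filter.1 hB
      exact sum_mem_parts_C_mul_X_pow w (mem_powerset.1 hBs) hB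
  · intro σ B
    simp only [mem_univ, true_and, mem_filter, mem_powerset]
    exact ⟨fun hB => ⟨hB, σ.le hB, σ.nonempty_of_mem_parts hB⟩, fun h => h.1⟩

theorem derivative_zetaPoly (m : ℕ) :
    derivative (zetaPoly w m) = ∑ k ∈ Icc 1 m, (w k * m.choose k) • zetaPoly w (m - k) := by
  set f : ℕ → S[X] := fun k => if 0 < k then w k • zetaPoly w (m - k) else 0
  have hf : ∀ B : Finset (Fin m),
      (if B.Nonempty then w #B • zetaPolyOn w (univ \ B) else 0) = f #B := fun B => by
    simp only [f, zetaPolyOn_eq_zetaPoly, card_univ_sdiff, Fintype.card_fin, card_pos]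
  have hIcc : (range (m + 1)).filter (0 < ·) = Icc 1 m := by ext; simp; omega
  rw [zetaPoly, derivative_zetaPolyOn, sum_filter, sum_congr rfl fun B _ => hf B,
    sum_powerset_apply_card, card_univ, Fintype.card_fin]
  simp only [f, smul_ite, smul_zero]
  rw [← sum_filter, hIcc]
  refine sum_congr rfl fun k _ => ?_
  rw [← Nat.cast_smul_eq_nsmul S, smul_smul, mul_comm]

/-- The umbral map `U : x^m ↦ a_m`. -/
noncomputable def zetaMap : S[X] →ₗ[S] S[X] :=
  lsum fun m => LinearMap.toSpanSingleton S S[X] (zetaPoly w m)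

theorem zetaMap_apply (p : S[X]) : zetaMap w p = p.sum fun m c => c • zetaPoly w m := by
  simp [zetaMap, lsum_apply]

theorem zetaMap_monomial (m : ℕ) (c : S) : zetaMap w (monomial m c) = c • zetaPoly w m := by
  rw [zetaMap_apply, sum_monomial_index _ _ (zero_smul S _)]

theorem zetaMap_X_pow (m : ℕ) : zetaMap w (X ^ m) = zetaPoly w m := by
  rw [← monomial_one_right_eq_X_pow, zetaMap_monomial, one_smul]

theorem coeff_zetaMap_natDegree (hw : w 1 = 1) (p : S[X]) :
    (zetaMap w p).coeff p.natDegree = p.leadingCoeff := by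
  rw [zetaMap_apply, Polynomial.sum_def, finsetSum_coeff, sum_eq_single p.natDegree]
  · rw [coeff_smul, coeff_zetaPoly_self w hw, smul_eq_mul, mul_one, leadingCoeff]
  · intro m hm hne
    have hlt : m < p.natDegree := (le_natDegree_of_mem_supp m hm).lt_of_ne hne
    rw [coeff_smul, coeff_eq_zero_of_natDegree_lt ((natDegree_zetaPoly_le w m).trans_lt hlt),
      smul_zero]
  · intro h
    rw [notMem_support_iff.1 h, zero_smul, coeff_zero]

end ZetaPoly

theorem zetaMap_injective {S : Type*} [CommRing S] {w : ℕ → S} (hw : w 1 = 1) :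
    Function.Injective (zetaMap w) :=
  (injective_iff_map_eq_zero (zetaMap w)).2 fun p hp =>
    leadingCoeff_eq_zero.1 (by rw [← coeff_zetaMap_natDegree w hw, hp, coeff_zero])

section Enumerators

open scoped Classical

variable {S : Type*} [CommRing S] (w : ℕ → S)

theorem zetaRel_self (hw : w 1 = 1) {n : ℕ} (σ : Finpartition (univ : Finset (Fin n))) :
    zetaRel w σ σ = 1 := by
  refine prod_eq_one fun B hB => ?_
  have hsingle : {A ∈ σ.parts | A ⊆ B} = {B} := by
    ext A
    simp only [mem_filter, mem_singleton]
    refine ⟨fun ⟨hA, hAB⟩ => ?_, by rintro rfl; exact ⟨hB, subset_rfl⟩⟩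
    obtain ⟨a, ha⟩ := σ.nonempty_of_mem_parts hA
    exact σ.eq_of_mem_parts hA hB ha (hAB ha)
  rw [hsingle, card_singleton, hw]

variable {n : ℕ}

theorem muW_self (π : Finpartition (univ : Finset (Fin n))) : muW w π π = 1 := by
  rw [muW, if_pos rfl]

theorem muW_of_ne {π σ : Finpartition (univ : Finset (Fin n))} (h : π ≠ σ) :
    muW w π σ = -∑ τ with π ≤ τ ∧ τ < σ, muW w π τ * zetaRel w τ σ := by
  rw [muW, if_neg h, sum_attach _ fun τ => muW w π τ * zetaRel w τ σ]

theorem sum_muW_mul_zetaRel (hw : w 1 = 1) (π σ : Finpartition (univ : Finset (Fin n))) :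
    ∑ τ with π ≤ τ ∧ τ ≤ σ, muW w π τ * zetaRel w τ σ = if π = σ then 1 else 0 := by
  by_cases hπσ : π = σ
  · subst hπσ
    have hsingle : filter (fun τ => π ≤ τ ∧ τ ≤ π) univ = {π} := by
      ext τ
      simp [le_antisymm_iff, and_comm]
    rw [hsingle, sum_singleton, muW_self, zetaRel_self w hw, mul_one, if_pos rfl]
  rw [if_neg hπσ]
  by_cases hle : π ≤ σ
  · have hsplit : filter (fun τ => π ≤ τ ∧ τ ≤ σ) univ =
        insert σ (filter (fun τ => π ≤ τ ∧ τ < σ) univ) := by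
      ext τ
      simp only [mem_filter, mem_univ, true_and, mem_insert, le_iff_lt_or_eq (b := σ)]
      constructor
      · rintro ⟨hπτ, hτσ | rfl⟩
        exacts [Or.inr ⟨hπτ, hτσ⟩, Or.inl rfl]
      · rintro (rfl | ⟨hπτ, hτσ⟩)
        exacts [⟨hle, Or.inr rfl⟩, ⟨hπτ, Or.inl hτσ⟩]
    rw [hsplit, sum_insert (by simp), zetaRel_self w hw, mul_one, muW_of_ne w hπσ, neg_add_cancel]
  · exact sum_eq_zero fun τ hτ => absurd ((mem_filter.1 hτ).2.1.trans (mem_filter.1 hτ).2.2) hle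

variable (n) in
theorem bPoly_eq_sum :
    bPoly w n = ∑ π : Finpartition (univ : Finset (Fin n)), C (muW w ⊥ π) * X ^ #π.parts := by
  rcases n with _ | n
  · have : Subsingleton (Finpartition (univ : Finset (Fin 0))) := ⟨fun σ ρ => by
      ext1; rw [σ.parts_eq_empty_iff.2 (by simp), ρ.parts_eq_empty_iff.2 (by simp)]⟩
    simp [bPoly, Fintype.sum_subsingleton _ ⊥, muW_self]
  · rw [bPoly, if_neg n.succ_ne_zero]

theorem eval_zero_bPoly (hn : 1 ≤ n) : (bPoly w n).eval 0 = 0 := by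
  have : Nonempty (Fin n) := ⟨⟨0, hn⟩⟩
  rw [bPoly_eq_sum, eval_finsetSum]
  refine sum_eq_zero fun π _ => ?_
  have hπ : π.parts.Nonempty := π.parts_nonempty (by simp [univ_nonempty.ne_empty])
  simp [zero_pow hπ.card_pos.ne']

variable (n) in
theorem zetaMap_bPoly (hw : w 1 = 1) : zetaMap w (bPoly w n) = X ^ n := by
  have hterm : ∀ π : Finpartition (univ : Finset (Fin n)), zetaMap w (C (muW w ⊥ π) * X ^ #π.parts)
      = ∑ σ with π ≤ σ, C (muW w ⊥ π * zetaRel w π σ) * X ^ #σ.parts := fun π => by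
    rw [← smul_eq_C_mul, map_smul, zetaMap_X_pow, ← zetaPolyOn_eq_zetaPoly, zetaPolyOn_parts,
      smul_sum]
    exact sum_congr rfl fun σ _ => by rw [smul_eq_C_mul, ← mul_assoc, ← C_mul, zetaRel]
  calc zetaMap w (bPoly w n)
      = ∑ π, ∑ σ with π ≤ σ, C (muW w ⊥ π * zetaRel w π σ) * X ^ #σ.parts := by
        rw [bPoly_eq_sum, map_sum]
        exact sum_congr rfl fun π _ => hterm π
    _ = ∑ σ, C (∑ π with ⊥ ≤ π ∧ π ≤ σ, muW w ⊥ π * zetaRel w π σ) * X ^ #σ.parts := by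
        rw [sum_comm' (t' := univ) (s' := fun σ => filter (fun π => ⊥ ≤ π ∧ π ≤ σ) univ)
          (by simp)]
        simp only [map_sum, sum_mul]
        congr 1
    _ = X ^ n := by
        simp only [sum_muW_mul_zetaRel w hw, apply_ite C, C_1, C_0, ite_mul, one_mul, zero_mul,
          sum_ite_eq, mem_univ, if_true, Finpartition.card_bot, card_univ, Fintype.card_fin]

end Enumerators

theorem opOf_eq_sum_of_natDegree_le (c : ℕ → R) {p : R[X]} {N : ℕ} (hN : p.natDegree ≤ N) :
    opOf c p = ∑ k ∈ Icc 1 N, (algebraMap ℚ R (1 / k.factorial) * c k) • derivative^[k] p := by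
  refine sum_subset (Icc_subset_Icc_right hN) fun k hk hkp => ?_
  rw [iterate_derivative_eq_zero (by simp only [mem_Icc] at hk hkp; omega), smul_zero]

noncomputable def opOfLinearMap (c : ℕ → R) : R[X] →ₗ[R] R[X] where
  toFun := opOf c
  map_add' p q := by
    rw [opOf_eq_sum_of_natDegree_le c (natDegree_add_le p q),
      opOf_eq_sum_of_natDegree_le c (le_max_left _ q.natDegree),
      opOf_eq_sum_of_natDegree_le c (le_max_right p.natDegree _), ← sum_add_distrib]
    simp only [iterate_map_add, smul_add]
  map_smul' r p := by
    rw [opOf_eq_sum_of_natDegree_le c (natDegree_smul_le r p), opOf, RingHom.id_apply, smul_sum]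
    simp only [iterate_derivative_smul, smul_comm r]

theorem opOf_X_pow (c : ℕ → R) (m : ℕ) :
    opOf c (X ^ m) = ∑ k ∈ Icc 1 m, (c k * m.choose k) • (X : R[X]) ^ (m - k) := by
  rw [opOf_eq_sum_of_natDegree_le c (natDegree_X_pow_le m)]
  refine sum_congr rfl fun k _ => ?_
  have hk : algebraMap ℚ R (1 / k.factorial) * (k.factorial : R) = 1 := by
    rw [← map_natCast (algebraMap ℚ R), ← map_mul, one_div,
      inv_mul_cancel₀ (by exact_mod_cast k.factorial_ne_zero), map_one]
  rw [iterate_derivative_X_pow_eq_smul, smul_smul, Nat.descFactorial_eq_factorial_mul_choose,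
    Nat.cast_mul]
  congr 1
  linear_combination (c k * m.choose k) * hk

theorem zetaMap_opOf (w : ℕ → R) (p : R[X]) : zetaMap w (opOf w p) = derivative (zetaMap w p) := by
  suffices (zetaMap w).comp (opOfLinearMap w) = derivative.comp (zetaMap w) from
    LinearMap.congr_fun this p
  refine lhom_ext' fun m => LinearMap.ext_ring ?_
  simp only [LinearMap.comp_apply, monomial_one_right_eq_X_pow]
  change zetaMap w (opOf w (X ^ m)) = _
  simp only [opOf_X_pow, map_sum, map_smul, zetaMap_X_pow, derivative_zetaPoly]

theorem bPoly_basic (w : ℕ → R) (hw : w 1 = 1) :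
    (∀ n : ℕ, 1 ≤ n → (bPoly w n).eval (0 : R) = 0) ∧
    (∀ n : ℕ, 1 ≤ n → opOf w (bPoly w n) = (n : R) • bPoly w (n - 1)) := by
  refine ⟨fun n hn => eval_zero_bPoly w hn, fun n _ => zetaMap_injective hw ?_⟩
  rw [zetaMap_opOf, map_smul, zetaMap_bPoly w n hw, zetaMap_bPoly w (n - 1) hw, derivative_X_pow,
    smul_eq_C_mul]
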